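/- (Monotonicity of relaxed Wyner common information in correlation) For 0 ≤ r₁ < r₂ ≤ 1/2 and t ≥ 0, C(r₁, t) ≥ C(r₂, t), where C(r, t) := inf over conditional distributions Q_{W|XY} with I_Q(X;Y|W) ≤ t of I_Q(XY;W), with (X,Y) ∼ DSBS(r). -/

import Mathlib

/-- The doubly symmetric binary source with crossover probability `r`. -/
noncomputable def dsbs (r : ℝ) : Bool × Bool → ℝ :=
  fun z => if z.1 = z.2 then (1 - r) / 2 else r / 2

/-- Joint distribution of `(X,Y,W)` where `(X,Y) ~ DSBS(r)` and `W` is generated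
from `(X,Y)` via the conditional distribution `Q`. -/
noncomputable def jointXYW (r : ℝ) {n : ℕ} (Q : Bool × Bool → Fin n → ℝ)
    (z : Bool × Bool) (w : Fin n) : ℝ := dsbs r z * Q z w

noncomputable def margW (r : ℝ) {n : ℕ} (Q : Bool × Bool → Fin n → ℝ) (w : Fin n) : ℝ :=
  ∑ z : Bool × Bool, jointXYW r Q z w

noncomputable def margXW (r : ℝ) {n : ℕ} (Q : Bool × Bool → Fin n → ℝ)
    (x : Bool) (w : Fin n) : ℝ := ∑ y : Bool, jointXYW r Q (x, y) w

noncomputable def margYW (r : ℝ) {n : ℕ} (Q : Bool × Bool → Fin n → ℝ)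
    (y : Bool) (w : Fin n) : ℝ := ∑ x : Bool, jointXYW r Q (x, y) w

/-- Mutual information `I(XY;W)` (base 2). -/
noncomputable def miXYW (r : ℝ) {n : ℕ} (Q : Bool × Bool → Fin n → ℝ) : ℝ :=
  ∑ z : Bool × Bool, ∑ w : Fin n,
    jointXYW r Q z w * Real.logb 2 (jointXYW r Q z w / (dsbs r z * margW r Q w))

/-- Conditional mutual information `I(X;Y|W)` (base 2). -/
noncomputable def cmiXY_W (r : ℝ) {n : ℕ} (Q : Bool × Bool → Fin n → ℝ) : ℝ :=
  ∑ x : Bool, ∑ y : Bool, ∑ w : Fin n,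
    jointXYW r Q (x, y) w *
      Real.logb 2 (jointXYW r Q (x, y) w * margW r Q w / (margXW r Q x w * margYW r Q y w))

/-- The `t`-relaxed Wyner common information of `DSBS(r)`. -/
noncomputable def relaxedC (r t : ℝ) : ℝ :=
  sInf {v : ℝ | ∃ (n : ℕ) (Q : Bool × Bool → Fin (n + 1) → ℝ),
    (∀ z w, 0 ≤ Q z w) ∧ (∀ z, ∑ w, Q z w = 1) ∧
    cmiXY_W r Q ≤ t ∧ v = miXYW r Q}

/-!
Send `X` through a binary symmetric channel `bsc q` with `binConv r₁ q = r₂`, so that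
`(X', Y) ∼ DSBS(r₂)`, and let `W ↔ (X, Y) ↔ (X', Y)`. For each `(y, w)`, both `P(x', y, w)` and
the reference weights `P(x', y) P(w)`, resp. `P(x', w) P(y, w) / P(w)`, are images under the
same stochastic matrix of the corresponding weights at `r₁`, so by the log-sum inequality
`I(XY;W)` and `I(X;Y|W)` can only decrease. Every `Q` feasible at `r₁` thus yields one feasible
at `r₂` with no larger objective.
-/

open Finset Real

theorem Real.sub_le_mul_log_div {a b : ℝ} (ha : 0 ≤ a) (hb : 0 ≤ b) (hab : 0 < a → 0 < b) :
    a - b ≤ a * log (a / b) := by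
  rcases ha.eq_or_lt with rfl | ha
  · simpa using hb
  · have := mul_le_mul_of_nonneg_left (one_sub_inv_le_log_of_pos (div_pos ha (hab ha))) ha.le
    rwa [inv_div, mul_sub, mul_one, mul_div_cancel₀ _ ha.ne'] at this

theorem Real.sum_mul_log_div_le {ι : Type*} (s : Finset ι) {a b : ι → ℝ}
    (ha : ∀ i ∈ s, 0 ≤ a i) (hb : ∀ i ∈ s, 0 ≤ b i) (hab : ∀ i ∈ s, 0 < a i → 0 < b i) :
    (∑ i ∈ s, a i) * log ((∑ i ∈ s, a i) / ∑ i ∈ s, b i) ≤ ∑ i ∈ s, a i * log (a i / b i) := by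
  rcases (sum_nonneg ha).eq_or_lt with hA | hA
  · have hzero := (sum_eq_zero_iff_of_nonneg ha).1 hA.symm
    rw [← hA, zero_mul, sum_eq_zero fun i hi => by rw [hzero i hi, zero_mul]]
  obtain ⟨j, hj, hja⟩ := exists_lt_of_sum_lt (f := fun _ => (0 : ℝ)) (by simpa using hA)
  have hB : 0 < ∑ i ∈ s, b i := lt_of_lt_of_le (hab j hj hja) (single_le_sum hb hj)
  set A := ∑ i ∈ s, a i
  set B := ∑ i ∈ s, b i
  have hc : 0 < A / B := div_pos hA hB
  -- Gibbs' inequality against `b` rescaled to the total mass of `a`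
  have hgibbs : ∀ i ∈ s, a i - b i * (A / B) ≤ a i * log (a i / b i) - a i * log (A / B) := by
    intro i hi
    rcases (ha i hi).eq_or_lt with h | h
    · simpa [← h] using mul_nonneg (hb i hi) hc.le
    have hbi := hab i hi h
    have := sub_le_mul_log_div (ha i hi) (mul_nonneg (hb i hi) hc.le) fun _ => mul_pos hbi hc
    rwa [← div_div, log_div (div_pos h hbi).ne' hc.ne', mul_sub] at this
  have := sum_le_sum hgibbs
  rw [sum_sub_distrib, sum_sub_distrib, ← sum_mul, ← sum_mul, mul_div_cancel₀ _ hB.ne',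
    sub_self] at this
  linarith

theorem Real.sum_mul_logb_div_le {ι : Type*} (s : Finset ι) {c : ℝ} (hc : 1 < c) {a b : ι → ℝ}
    (ha : ∀ i ∈ s, 0 ≤ a i) (hb : ∀ i ∈ s, 0 ≤ b i) (hab : ∀ i ∈ s, 0 < a i → 0 < b i) :
    (∑ i ∈ s, a i) * logb c ((∑ i ∈ s, a i) / ∑ i ∈ s, b i) ≤
      ∑ i ∈ s, a i * logb c (a i / b i) := by
  simp only [logb, ← mul_div_assoc, ← sum_div]
  exact div_le_div_of_nonneg_right (sum_mul_log_div_le s ha hb hab) (log_pos hc).le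

/-- Data processing inequality for a stochastic matrix `K`. -/
theorem Real.sum_mul_logb_div_comp_le {α β : Type*} [Fintype α] [Fintype β] {c : ℝ} (hc : 1 < c)
    {K : α → β → ℝ} (hK : ∀ a b, 0 ≤ K a b) (hK1 : ∀ a, ∑ b, K a b = 1) {p q : α → ℝ}
    (hp : ∀ a, 0 ≤ p a) (hq : ∀ a, 0 ≤ q a) (hpq : ∀ a, 0 < p a → 0 < q a) :
    ∑ b, (∑ a, K a b * p a) * logb c ((∑ a, K a b * p a) / ∑ a, K a b * q a) ≤
      ∑ a, p a * logb c (p a / q a) := by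
  calc _ ≤ ∑ b, ∑ a, K a b * p a * logb c (K a b * p a / (K a b * q a)) :=
        sum_le_sum fun b _ => sum_mul_logb_div_le _ hc (fun a _ => mul_nonneg (hK a b) (hp a))
          (fun a _ => mul_nonneg (hK a b) (hq a))
          fun a _ h =>
            mul_pos (pos_of_mul_pos_left h (hp a)) (hpq a (pos_of_mul_pos_right h (hK a b)))
    _ = ∑ b, ∑ a, K a b * (p a * logb c (p a / q a)) := by
        refine sum_congr rfl fun b _ => sum_congr rfl fun a _ => ?_
        rcases eq_or_ne (K a b) 0 with h | h
        · simp [h]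
        · rw [mul_div_mul_left _ _ h, mul_assoc]
    _ = _ := by rw [sum_comm]; simp only [← sum_mul, hK1, one_mul]

theorem sum_sum_le_sum_sum_comm {α β : Type*} [Fintype α] [Fintype β] {f g : α → β → ℝ}
    (h : ∀ b, ∑ a, f a b ≤ ∑ a, g a b) : ∑ a, ∑ b, f a b ≤ ∑ a, ∑ b, g a b := by
  rw [sum_comm, sum_comm (f := g)]
  exact sum_le_sum fun b _ => h b

theorem dsbs_nonneg {r : ℝ} (h0 : 0 ≤ r) (h1 : r ≤ 1) (z : Bool × Bool) : 0 ≤ dsbs r z := by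
  unfold dsbs; split <;> linarith

theorem dsbs_pos {r : ℝ} (h0 : 0 < r) (h1 : r < 1) (z : Bool × Bool) : 0 < dsbs r z := by
  unfold dsbs; split <;> linarith

theorem sum_dsbs (r : ℝ) : ∑ z, dsbs r z = 1 := by
  simp only [dsbs, Fintype.sum_prod_type, Fintype.sum_bool]
  norm_num
  ring

section Joint

variable {r : ℝ} {n : ℕ} {Q : Bool × Bool → Fin n → ℝ}

theorem jointXYW_nonneg (h0 : 0 ≤ r) (h1 : r ≤ 1) (hQ : ∀ z w, 0 ≤ Q z w) (z : Bool × Bool)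
    (w : Fin n) : 0 ≤ jointXYW r Q z w :=
  mul_nonneg (dsbs_nonneg h0 h1 z) (hQ z w)

theorem margW_nonneg (h0 : 0 ≤ r) (h1 : r ≤ 1) (hQ : ∀ z w, 0 ≤ Q z w) (w : Fin n) :
    0 ≤ margW r Q w :=
  sum_nonneg fun z _ => jointXYW_nonneg h0 h1 hQ z w

theorem sum_jointXYW (hQ1 : ∀ z, ∑ w, Q z w = 1) (z : Bool × Bool) :
    ∑ w, jointXYW r Q z w = dsbs r z := by
  simp only [jointXYW, ← mul_sum, hQ1, mul_one]

theorem sum_margW (hQ1 : ∀ z, ∑ w, Q z w = 1) : ∑ w, margW r Q w = 1 := by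
  simp only [margW]
  rw [sum_comm]
  simp only [sum_jointXYW hQ1, sum_dsbs]

theorem sum_margXW (w : Fin n) : ∑ x, margXW r Q x w = margW r Q w :=
  (Fintype.sum_prod_type fun z => jointXYW r Q z w).symm

theorem dsbs_pos_of_jointXYW_pos (hQ : ∀ z w, 0 ≤ Q z w) {z : Bool × Bool} {w : Fin n}
    (h : 0 < jointXYW r Q z w) : 0 < dsbs r z :=
  pos_of_mul_pos_left h (hQ z w)

theorem jointXYW_le_margW (h0 : 0 ≤ r) (h1 : r ≤ 1) (hQ : ∀ z w, 0 ≤ Q z w) (z : Bool × Bool)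
    (w : Fin n) : jointXYW r Q z w ≤ margW r Q w :=
  single_le_sum (fun z _ => jointXYW_nonneg h0 h1 hQ z w) (mem_univ z)

theorem jointXYW_le_margXW (h0 : 0 ≤ r) (h1 : r ≤ 1) (hQ : ∀ z w, 0 ≤ Q z w) (x y : Bool)
    (w : Fin n) : jointXYW r Q (x, y) w ≤ margXW r Q x w :=
  single_le_sum (fun y _ => jointXYW_nonneg h0 h1 hQ (x, y) w) (mem_univ y)

theorem jointXYW_le_margYW (h0 : 0 ≤ r) (h1 : r ≤ 1) (hQ : ∀ z w, 0 ≤ Q z w) (x y : Bool)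
    (w : Fin n) : jointXYW r Q (x, y) w ≤ margYW r Q y w :=
  single_le_sum (fun x _ => jointXYW_nonneg h0 h1 hQ (x, y) w) (mem_univ x)

theorem miXYW_nonneg (h0 : 0 ≤ r) (h1 : r ≤ 1) (hQ : ∀ z w, 0 ≤ Q z w)
    (hQ1 : ∀ z, ∑ w, Q z w = 1) : 0 ≤ miXYW r Q := by
  have hp : ∑ zw : (Bool × Bool) × Fin n, jointXYW r Q zw.1 zw.2 = 1 := by
    rw [Fintype.sum_prod_type]; simp only [sum_jointXYW hQ1, sum_dsbs]
  have hq : ∑ zw : (Bool × Bool) × Fin n, dsbs r zw.1 * margW r Q zw.2 = 1 := by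
    rw [Fintype.sum_prod_type]; simp only [← mul_sum, sum_margW hQ1, mul_one, sum_dsbs]
  have hlogsum := sum_mul_logb_div_le univ one_lt_two
    (a := fun zw : (Bool × Bool) × Fin n => jointXYW r Q zw.1 zw.2)
    (b := fun zw => dsbs r zw.1 * margW r Q zw.2)
    (fun zw _ => jointXYW_nonneg h0 h1 hQ _ _)
    (fun zw _ => mul_nonneg (dsbs_nonneg h0 h1 _) (margW_nonneg h0 h1 hQ _))
    fun zw _ h => mul_pos (dsbs_pos_of_jointXYW_pos hQ h)
      (h.trans_le (jointXYW_le_margW h0 h1 hQ _ _))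
  rw [hp, hq, div_one, logb_one, mul_zero] at hlogsum
  simpa only [miXYW, Fintype.sum_prod_type] using hlogsum

theorem cmiXY_W_eq_zero_of_condIndep
    (h : ∀ x y w, jointXYW r Q (x, y) w * margW r Q w = margXW r Q x w * margYW r Q y w) :
    cmiXY_W r Q = 0 := by
  refine sum_eq_zero fun x _ => sum_eq_zero fun y _ => sum_eq_zero fun w _ => ?_
  rw [h]
  rcases eq_or_ne (margXW r Q x w * margYW r Q y w) 0 with h0 | h0 <;> simp [h0]

end Joint

noncomputable def bsc (q : ℝ) (a b : Bool) : ℝ := if a = b then 1 - q else q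

/-- Crossover probability of `bsc r` followed by `bsc q`. -/
def binConv (r q : ℝ) : ℝ := r * (1 - q) + (1 - r) * q

theorem bsc_nonneg {q : ℝ} (h0 : 0 ≤ q) (h1 : q ≤ 1) (a b : Bool) : 0 ≤ bsc q a b := by
  unfold bsc; split <;> linarith

theorem sum_bsc_right (q : ℝ) (a : Bool) : ∑ b, bsc q a b = 1 := by
  cases a <;> simp [bsc]

theorem sum_bsc_mul_dsbs (r q : ℝ) (x y : Bool) :
    ∑ x₁, bsc q x₁ x * dsbs r (x₁, y) = dsbs (binConv r q) (x, y) := by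
  cases x <;> cases y <;> simp [bsc, dsbs, binConv] <;> ring

theorem exists_binConv_eq {r₁ r₂ : ℝ} (h12 : r₁ ≤ r₂) (h2 : r₂ ≤ 1 - r₁) :
    ∃ q, 0 ≤ q ∧ q ≤ 1 ∧ binConv r₁ q = r₂ := by
  rcases (show 0 ≤ 1 - 2 * r₁ by linarith).eq_or_lt with h | h
  · exact ⟨0, le_rfl, zero_le_one, by simp only [binConv]; linarith⟩
  · refine ⟨(r₂ - r₁) / (1 - 2 * r₁), div_nonneg (by linarith) h.le,
      (div_le_one h).2 (by linarith), ?_⟩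
    rw [show ∀ q, binConv r₁ q = r₁ + q * (1 - 2 * r₁) from fun q => by unfold binConv; ring,
      div_mul_cancel₀ _ h.ne']
    ring

/-- The law of `W` given `(X', Y)`, where `X'` is `X` sent through `bsc q` and
`W ↔ (X, Y) ↔ (X', Y)`; then `(X', Y) ∼ DSBS(binConv r q)`. -/
noncomputable def flipCond (r q : ℝ) {n : ℕ} (Q : Bool × Bool → Fin n → ℝ) :
    Bool × Bool → Fin n → ℝ :=
  fun z w => (∑ x, bsc q x z.1 * jointXYW r Q (x, z.2) w) / dsbs (binConv r q) z

section FlipCond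

variable {r q : ℝ} {n : ℕ} {Q : Bool × Bool → Fin n → ℝ}

theorem flipCond_nonneg (h0 : 0 ≤ r) (h1 : r ≤ 1) (hq0 : 0 ≤ q) (hq1 : q ≤ 1)
    (hQ : ∀ z w, 0 ≤ Q z w) (z : Bool × Bool) (w : Fin n) : 0 ≤ flipCond r q Q z w := by
  have hbsc := bsc_nonneg hq0 hq1
  refine div_nonneg (sum_nonneg fun x _ => mul_nonneg (hbsc _ _) (jointXYW_nonneg h0 h1 hQ _ _)) ?_
  rw [← sum_bsc_mul_dsbs]
  exact sum_nonneg fun x _ => mul_nonneg (hbsc _ _) (dsbs_nonneg h0 h1 _)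

theorem sum_flipCond (hd : ∀ z, dsbs (binConv r q) z ≠ 0) (hQ1 : ∀ z, ∑ w, Q z w = 1)
    (z : Bool × Bool) : ∑ w, flipCond r q Q z w = 1 := by
  simp only [flipCond, ← sum_div, sum_comm (γ := Fin n), ← mul_sum, sum_jointXYW hQ1,
    sum_bsc_mul_dsbs]
  exact div_self (hd z)

theorem jointXYW_flipCond (hd : ∀ z, dsbs (binConv r q) z ≠ 0) (x y : Bool) (w : Fin n) :
    jointXYW (binConv r q) (flipCond r q Q) (x, y) w = ∑ x₁, bsc q x₁ x * jointXYW r Q (x₁, y) w :=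
  mul_div_cancel₀ _ (hd (x, y))

theorem margYW_flipCond (hd : ∀ z, dsbs (binConv r q) z ≠ 0) (y : Bool) (w : Fin n) :
    margYW (binConv r q) (flipCond r q Q) y w = margYW r Q y w := by
  simp only [margYW, jointXYW_flipCond hd]
  rw [sum_comm]
  simp only [← sum_mul, sum_bsc_right, one_mul]

theorem margXW_flipCond (hd : ∀ z, dsbs (binConv r q) z ≠ 0) (x : Bool) (w : Fin n) :
    margXW (binConv r q) (flipCond r q Q) x w = ∑ x₁, bsc q x₁ x * margXW r Q x₁ w := by
  simp only [margXW, jointXYW_flipCond hd, mul_sum]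
  exact sum_comm

theorem margW_flipCond (hd : ∀ z, dsbs (binConv r q) z ≠ 0) (w : Fin n) :
    margW (binConv r q) (flipCond r q Q) w = margW r Q w := by
  simp only [← sum_margXW, margXW_flipCond hd]
  rw [sum_comm]
  simp only [← sum_mul, sum_bsc_right, one_mul]

theorem miXYW_flipCond_le (h0 : 0 ≤ r) (h1 : r ≤ 1) (hq0 : 0 ≤ q) (hq1 : q ≤ 1)
    (hQ : ∀ z w, 0 ≤ Q z w) (hd : ∀ z, dsbs (binConv r q) z ≠ 0) :
    miXYW (binConv r q) (flipCond r q Q) ≤ miXYW r Q := by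
  simp only [miXYW, Fintype.sum_prod_type]
  refine sum_sum_le_sum_sum_comm fun y => sum_sum_le_sum_sum_comm fun w => ?_
  have key := sum_mul_logb_div_comp_le one_lt_two (bsc_nonneg hq0 hq1) (sum_bsc_right q)
    (p := fun x => jointXYW r Q (x, y) w) (q := fun x => dsbs r (x, y) * margW r Q w)
    (fun x => jointXYW_nonneg h0 h1 hQ _ w)
    (fun x => mul_nonneg (dsbs_nonneg h0 h1 _) (margW_nonneg h0 h1 hQ w))
    fun x h => mul_pos (dsbs_pos_of_jointXYW_pos hQ h) (h.trans_le (jointXYW_le_margW h0 h1 hQ _ w))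
  simp only [← mul_assoc, ← sum_mul, sum_bsc_mul_dsbs] at key
  simpa only [jointXYW_flipCond hd, margW_flipCond hd] using key

theorem cmiXY_W_flipCond_le (h0 : 0 ≤ r) (h1 : r ≤ 1) (hq0 : 0 ≤ q) (hq1 : q ≤ 1)
    (hQ : ∀ z w, 0 ≤ Q z w) (hd : ∀ z, dsbs (binConv r q) z ≠ 0) :
    cmiXY_W (binConv r q) (flipCond r q Q) ≤ cmiXY_W r Q := by
  simp only [cmiXY_W]
  refine sum_sum_le_sum_sum_comm fun y => sum_sum_le_sum_sum_comm fun w => ?_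
  have key := sum_mul_logb_div_comp_le one_lt_two (bsc_nonneg hq0 hq1) (sum_bsc_right q)
    (p := fun x => jointXYW r Q (x, y) w)
    (q := fun x => margXW r Q x w * margYW r Q y w / margW r Q w)
    (fun x => jointXYW_nonneg h0 h1 hQ _ w)
    (fun x => div_nonneg (mul_nonneg (sum_nonneg fun y _ => jointXYW_nonneg h0 h1 hQ _ w)
      (sum_nonneg fun x _ => jointXYW_nonneg h0 h1 hQ _ w)) (margW_nonneg h0 h1 hQ w))
    fun x h => div_pos (mul_pos (h.trans_le (jointXYW_le_margXW h0 h1 hQ _ _ w))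
      (h.trans_le (jointXYW_le_margYW h0 h1 hQ _ _ w)))
      (h.trans_le (jointXYW_le_margW h0 h1 hQ _ w))
  simp only [← mul_div_assoc, ← mul_assoc, ← sum_mul, ← sum_div, div_div_eq_mul_div] at key
  simpa only [jointXYW_flipCond hd, margW_flipCond hd, margYW_flipCond hd, margXW_flipCond hd]
    using key

end FlipCond

noncomputable def copyX : Bool × Bool → Fin 2 → ℝ :=
  fun z w => if (w : ℕ) = z.1.toNat then 1 else 0

theorem cmiXY_W_copyX (r : ℝ) : cmiXY_W r copyX = 0 := by
  refine cmiXY_W_eq_zero_of_condIndep fun x y w => ?_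
  fin_cases w <;> cases x <;> cases y <;>
    simp [jointXYW, margW, margXW, margYW, copyX, Fintype.sum_prod_type] <;> ring

theorem le_relaxedC {r t v : ℝ} (ht : 0 ≤ t)
    (h : ∀ (n : ℕ) (Q : Bool × Bool → Fin (n + 1) → ℝ), (∀ z w, 0 ≤ Q z w) →
      (∀ z, ∑ w, Q z w = 1) → cmiXY_W r Q ≤ t → v ≤ miXYW r Q) :
    v ≤ relaxedC r t := by
  refine le_csInf ⟨_, 1, copyX, ?_, ?_, (cmiXY_W_copyX r).trans_le ht, rfl⟩ ?_
  · intro z w; unfold copyX; split <;> norm_num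
  · rintro ⟨x, y⟩; rw [Fin.sum_univ_two]; cases x <;> simp [copyX]
  · rintro _ ⟨n, Q, hQ, hQ1, hcmi, rfl⟩
    exact h n Q hQ hQ1 hcmi

theorem relaxedC_le {r t : ℝ} (h0 : 0 ≤ r) (h1 : r ≤ 1) {n : ℕ} {Q : Bool × Bool → Fin (n + 1) → ℝ}
    (hQ : ∀ z w, 0 ≤ Q z w) (hQ1 : ∀ z, ∑ w, Q z w = 1) (hcmi : cmiXY_W r Q ≤ t) :
    relaxedC r t ≤ miXYW r Q := by
  refine csInf_le ⟨0, ?_⟩ ⟨n, Q, hQ, hQ1, hcmi, rfl⟩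
  rintro _ ⟨m, Q', hQ', hQ1', -, rfl⟩
  exact miXYW_nonneg h0 h1 hQ' hQ1'

theorem stmt_12 (r₁ r₂ t : ℝ) (h0 : 0 ≤ r₁) (h12 : r₁ < r₂) (h2 : r₂ ≤ 1/2)
    (ht : 0 ≤ t) : relaxedC r₂ t ≤ relaxedC r₁ t := by
  obtain ⟨q, hq0, hq1, rfl⟩ := exists_binConv_eq h12.le (by linarith)
  have hd : ∀ z, dsbs (binConv r₁ q) z ≠ 0 := fun z => (dsbs_pos (by linarith) (by linarith) z).ne'
  refine le_relaxedC ht fun n Q hQ hQ1 hcmi => ?_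
  have h1 : r₁ ≤ 1 := by linarith
  calc relaxedC (binConv r₁ q) t
      ≤ miXYW (binConv r₁ q) (flipCond r₁ q Q) :=
        relaxedC_le (by linarith) (by linarith) (flipCond_nonneg h0 h1 hq0 hq1 hQ)
          (sum_flipCond hd hQ1) ((cmiXY_W_flipCond_le h0 h1 hq0 hq1 hQ hd).trans hcmi)
    _ ≤ miXYW r₁ Q := miXYW_flipCond_le h0 h1 hq0 hq1 hQ hd
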